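/- arXiv:1810.02471 — 2 statements merged into one kernel-verified Lean document; each statement's English description precedes it below -/
import Mathlib

section
/- Every trace has a unique Foata normal form: for every t ∈ M(Σ, D) there is exactly one word A₁⋯A_p ∈ Foata with Π(A₁⋯A_p) = t, where Π is the canonical morphism sending a set {a₁,…,a_n} of pairwise independent letters to the trace [a₁⋯a_n]. -/
variable {α : Type*}

/-- One commutation step: swap two adjacent independent letters
(letters `a`, `b` with `(a,b) ∉ D`, i.e. `(a,b) ∈ I`). -/
inductive TraceStep (D : α → α → Prop) : List α → List α → Prop
  | swap (x y : List α) (a b : α) (h : ¬ D a b) :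
      TraceStep D (x ++ a :: b :: y) (x ++ b :: a :: y)

/-- Trace equivalence `≡_D`: the least equivalence relation containing all
swaps of adjacent independent letters in arbitrary contexts (equivalently,
the least congruence on `Σ*` with `ab ≡ ba` for `(a,b) ∈ I`). -/
abbrev TraceEquiv (D : α → α → Prop) : List α → List α → Prop :=
  Relation.EqvGen (TraceStep D)

/-- `I_D⁻`: nonempty sets of pairwise independent letters (independence cliques). -/
def Clique (D : α → α → Prop) : Type _ :=
  {A : Finset α // A.Nonempty ∧ ∀ a ∈ A, ∀ b ∈ A, a ≠ b → ¬ D a b}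

/-- `A ▷ B` : every letter of `B` depends on some letter of `A`. -/
def Rhd (D : α → α → Prop) (A B : Clique D) : Prop :=
  ∀ b ∈ B.1, ∃ a ∈ A.1, D a b

/-- The set of Foata normal forms: words `A₁ ⋯ A_p` over `I_D⁻` with
`A_i ▷ A_{i+1}` for all `i`. -/
def Foata (D : α → α → Prop) : Language (Clique D) :=
  {w | w.Chain' (Rhd D)}

/-- The canonical morphism `Π : (I_D⁻)* → Σ*` (composed with `[·]` it gives
the canonical morphism to `M(Σ,D)`): each clique is mapped to the product of
its elements (in some order; the trace is independent of the order). -/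
noncomputable def cliqueFlat {D : α → α → Prop} (w : List (Clique D)) : List α :=
  (w.map fun A => A.1.toList).flatten

/-!
Existence: a letter `a` appended to a Foata word `A₁ ⋯ A_p` can be added to the clique following
the last `A_j` that contains a letter dependent on `a`, since it commutes with all later letters.

Uniqueness: the first clique of a Foata form of `t` is the set of letters `a` whose first
occurrence is independent of every letter before it. This property is invariant under commutation
of adjacent independent letters, so the first clique is determined by `t`. Cancelling it (erasing
the first occurrence of a letter respects trace equivalence, as `D` is reflexive) and inducting
gives the rest.
-/

theorem Relation.EqvGen.map {β γ : Type*} {r : β → β → Prop} {s : γ → γ → Prop} (f : β → γ)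
    (hf : ∀ a b, r a b → EqvGen s (f a) (f b)) {a b : β} (h : EqvGen r a b) :
    EqvGen s (f a) (f b) := by
  induction h with
  | rel _ _ h => exact hf _ _ h
  | refl => exact .refl _
  | symm _ _ _ ih => exact .symm _ _ ih
  | trans _ _ _ _ _ ih₁ ih₂ => exact .trans _ _ _ ih₁ ih₂

theorem List.exists_eq_append_longest_suffix {β : Type*} (p : β → Prop) :
    ∀ l : List β, ∃ x y, l = x ++ y ∧ (∀ b ∈ y, p b) ∧ ∀ b ∈ x.getLast?, ¬ p b
  | [] => ⟨[], [], rfl, by simp, by simp⟩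
  | c :: l => by
    obtain ⟨x, y, rfl, hy, hx⟩ := exists_eq_append_longest_suffix p l
    cases x with
    | nil =>
      by_cases hc : p c
      · exact ⟨[], c :: y, rfl, by simpa [hc] using hy, by simp⟩
      · exact ⟨[c], y, rfl, hy, by simpa using hc⟩
    | cons d x => exact ⟨c :: d :: x, y, rfl, hy, by simpa [List.getLast?_cons_cons] using hx⟩

namespace TraceEquiv

variable {D : α → α → Prop} {u v w : List α}

theorem symm (h : TraceEquiv D u v) : TraceEquiv D v u := Relation.EqvGen.symm _ _ h

theorem trans (h₁ : TraceEquiv D u v) (h₂ : TraceEquiv D v w) : TraceEquiv D u w :=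
  Relation.EqvGen.trans _ _ _ h₁ h₂

theorem append_left (x : List α) (h : TraceEquiv D u v) : TraceEquiv D (x ++ u) (x ++ v) :=
  h.map (x ++ ·) fun _ _ ⟨y, z, a, b, hab⟩ =>
    .rel _ _ (by simpa using TraceStep.swap (x ++ y) z a b hab)

theorem append_right (y : List α) (h : TraceEquiv D u v) : TraceEquiv D (u ++ y) (v ++ y) :=
  h.map (· ++ y) fun _ _ ⟨x, z, a, b, hab⟩ =>
    .rel _ _ (by simpa using TraceStep.swap x (z ++ y) a b hab)

theorem perm (h : TraceEquiv D u v) : u.Perm v :=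
  (Equivalence.eqvGen_iff (List.Perm.eqv α)).1 <|
    Relation.EqvGen.mono (fun _ _ ⟨x, y, a, b, _⟩ => (List.Perm.swap b a y).append_left x) _ _ h

theorem of_perm (h : u.Perm v) (hu : ∀ a ∈ u, ∀ b ∈ u, a ≠ b → ¬ D a b) : TraceEquiv D u v := by
  induction h with
  | nil => exact .refl _
  | cons x _ ih =>
    exact (ih fun a ha b hb => hu a (by simp [ha]) b (by simp [hb])).append_left [x]
  | swap x y l =>
    by_cases hxy : x = y
    · subst hxy; exact .refl _
    · have hyx : ¬ D y x := hu y (by simp) x (by simp) (Ne.symm hxy)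
      exact .rel _ _ (by simpa using TraceStep.swap [] l y x hyx)
  | trans h₁ _ ih₁ ih₂ =>
    exact (ih₁ hu).trans (ih₂ fun a ha b hb => hu a (h₁.mem_iff.2 ha) b (h₁.mem_iff.2 hb))

theorem cons_append_singleton {a : α} {l : List α} (h : ∀ b ∈ l, ¬ D a b) :
    TraceEquiv D (a :: l) (l ++ [a]) := by
  induction l with
  | nil => exact .refl _
  | cons b l ih =>
    have hswap : TraceEquiv D (a :: b :: l) (b :: a :: l) :=
      .rel _ _ (by simpa using TraceStep.swap [] l a b (h b (by simp)))
    exact hswap.trans ((ih fun c hc => h c (by simp [hc])).append_left [b])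

variable [DecidableEq α]

theorem erase (hrefl : Reflexive D) (a : α) (h : TraceEquiv D u v) :
    TraceEquiv D (u.erase a) (v.erase a) :=
  h.map (·.erase a) fun _ _ ⟨x, y, b, c, hbc⟩ => by
    by_cases hx : a ∈ x
    · simp only [List.erase_append_left _ hx]
      exact .rel _ _ (.swap _ _ _ _ hbc)
    simp only [List.erase_append_right _ hx]
    rcases eq_or_ne b a with rfl | hb
    · have hc : c ≠ b := by rintro rfl; exact hbc (hrefl c)
      simpa [List.erase_cons, hc] using .refl _
    rcases eq_or_ne c a with rfl | hc
    · simpa [List.erase_cons, hb] using .refl _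
    · simpa [List.erase_cons, hb, hc] using .rel _ _ (TraceStep.swap x (y.erase a) b c hbc)

theorem of_append_left (hrefl : Reflexive D) {x : List α} (h : TraceEquiv D (x ++ u) (x ++ v)) :
    TraceEquiv D u v := by
  induction x with
  | nil => simpa using h
  | cons b x ih => exact ih (by simpa using h.erase hrefl b)

end TraceEquiv

/-- For `a ∈ u`: every letter before the first `a` in `u` is independent of `a`, so that this
`a` commutes to the front. -/
def CommutesToFront (D : α → α → Prop) (a : α) : List α → Prop
  | [] => True
  | b :: u => b = a ∨ (¬ D b a ∧ CommutesToFront D a u)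

section CommutesToFront

variable {D : α → α → Prop} {a : α} {u v : List α}

theorem commutesToFront_append_of_mem {x : List α} (hx : a ∈ x)
    (hind : ∀ b ∈ x, b ≠ a → ¬ D b a) (y : List α) : CommutesToFront D a (x ++ y) := by
  induction x with
  | nil => simp at hx
  | cons b x ih =>
    by_cases hb : b = a
    · exact Or.inl hb
    · exact Or.inr ⟨hind b (by simp) hb,
        ih (by simpa [Ne.symm hb] using hx) fun c hc => hind c (by simp [hc])⟩

theorem commutesToFront_append_of_not_mem {x : List α} (hx : a ∉ x) (y : List α) :
    CommutesToFront D a (x ++ y) ↔ (∀ b ∈ x, ¬ D b a) ∧ CommutesToFront D a y := by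
  induction x with
  | nil => simp
  | cons b x ih =>
    have hb : b ≠ a := fun h => hx (by simp [h])
    simp only [List.cons_append, CommutesToFront, hb, false_or, ih (fun h => hx (by simp [h])),
      List.forall_mem_cons, and_assoc]

theorem TraceStep.commutesToFront_iff (hrefl : Reflexive D) (hsymm : Symmetric D)
    (h : TraceStep D u v) : CommutesToFront D a u ↔ CommutesToFront D a v := by
  obtain ⟨x, y, b, c, hbc⟩ := h
  induction x with
  | nil =>
    simp only [List.nil_append, CommutesToFront]
    rcases eq_or_ne b a with rfl | hb
    · have hcb : c ≠ b := by rintro rfl; exact hbc (hrefl c)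
      simpa [hcb] using fun h => hbc (hsymm h)
    rcases eq_or_ne c a with rfl | hc
    · simpa [hb] using hbc
    · simp only [hb, hc, false_or]
      tauto
  | cons d x ih => simp only [List.cons_append, CommutesToFront, ih]

theorem TraceEquiv.commutesToFront_iff (hrefl : Reflexive D) (hsymm : Symmetric D)
    (h : TraceEquiv D u v) : CommutesToFront D a u ↔ CommutesToFront D a v := by
  induction h with
  | rel _ _ h => exact TraceStep.commutesToFront_iff hrefl hsymm h
  | refl => exact Iff.rfl
  | symm _ _ _ ih => exact ih.symm
  | trans _ _ _ _ _ ih₁ ih₂ => exact ih₁.trans ih₂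

end CommutesToFront

section Foata

variable {D : α → α → Prop} {A B : Clique D} {w w' : List (Clique D)}

@[simp] theorem cliqueFlat_nil : cliqueFlat ([] : List (Clique D)) = [] := rfl

@[simp] theorem cliqueFlat_cons : cliqueFlat (A :: w) = A.1.toList ++ cliqueFlat w := by
  simp [cliqueFlat]

@[simp] theorem cliqueFlat_append : cliqueFlat (w ++ w') = cliqueFlat w ++ cliqueFlat w' := by
  simp [cliqueFlat]

theorem cliqueFlat_cons_ne_nil : cliqueFlat (A :: w) ≠ [] := by
  simp [Finset.toList_eq_nil, A.2.1.ne_empty]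

theorem Rhd.mono_left {A' : Clique D} (hA : A.1 ⊆ A'.1) (h : Rhd D A B) : Rhd D A' B :=
  fun b hb => (h b hb).imp fun _ ⟨ha, hab⟩ => ⟨hA ha, hab⟩

theorem commutesToFront_cliqueFlat_cons {a : α} (ha : a ∈ A.1) :
    CommutesToFront D a (cliqueFlat (A :: w)) := by
  rw [cliqueFlat_cons]
  exact commutesToFront_append_of_mem (by simpa using ha)
    (fun b hb hba => A.2.2 b (by simpa using hb) a ha hba) _

theorem Foata.not_commutesToFront {a : α} (hw : A :: w ∈ Foata D) (hA : a ∉ A.1)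
    (hwa : a ∈ cliqueFlat w) : ¬ CommutesToFront D a (cliqueFlat (A :: w)) := by
  induction w generalizing A with
  | nil => simp at hwa
  | cons B w ih =>
    obtain ⟨hAB, hBw⟩ := List.isChain_cons_cons.1 hw
    rw [cliqueFlat_cons, commutesToFront_append_of_not_mem (by simpa using hA)]
    rintro ⟨hAa, hBa⟩
    by_cases hB : a ∈ B.1
    · obtain ⟨c, hc, hca⟩ := hAB a hB
      exact hAa c (by simpa using hc) hca
    · exact ih hBw hB (by simpa [hB] using hwa) hBa

variable [DecidableEq α] (hrefl : Reflexive D) (hsymm : Symmetric D)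
include hrefl hsymm

theorem Foata.head_subset_of_traceEquiv {A' : Clique D} (hw' : A' :: w' ∈ Foata D)
    (h : TraceEquiv D (cliqueFlat (A :: w)) (cliqueFlat (A' :: w'))) : A.1 ⊆ A'.1 := by
  intro a ha
  by_contra hA'
  have hmem : a ∈ cliqueFlat (A' :: w') := h.perm.subset (by simpa using Or.inl ha)
  exact Foata.not_commutesToFront hw' hA' (by simpa [hA'] using hmem)
    ((h.commutesToFront_iff hrefl hsymm).1 (commutesToFront_cliqueFlat_cons ha))

theorem Foata.eq_of_traceEquiv (hw : w ∈ Foata D) (hw' : w' ∈ Foata D)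
    (h : TraceEquiv D (cliqueFlat w) (cliqueFlat w')) : w = w' := by
  induction w generalizing w' with
  | nil =>
    cases w' with
    | nil => rfl
    | cons A' w' => exact (cliqueFlat_cons_ne_nil h.perm.symm.eq_nil).elim
  | cons A w ih =>
    cases w' with
    | nil => exact (cliqueFlat_cons_ne_nil h.perm.eq_nil).elim
    | cons A' w' =>
      have hA : A = A' := Subtype.ext <|
        (Foata.head_subset_of_traceEquiv hrefl hsymm hw' h).antisymm
          (Foata.head_subset_of_traceEquiv hrefl hsymm hw h.symm)
      subst hA
      rw [cliqueFlat_cons, cliqueFlat_cons] at h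
      exact congrArg (A :: ·) (ih hw.tail hw'.tail (h.of_append_left hrefl))

end Foata

section Existence

variable {D : α → α → Prop}

def Clique.singleton (a : α) : Clique D :=
  ⟨{a}, Finset.singleton_nonempty a, by simp⟩

@[simp] theorem Clique.coe_singleton (a : α) : (Clique.singleton a : Clique D).1 = {a} := rfl

variable [DecidableEq α]

def Clique.insert (A : Clique D) (a : α) (ha : ∀ b ∈ A.1, ¬ D a b ∧ ¬ D b a) : Clique D :=
  ⟨Insert.insert a A.1, Finset.insert_nonempty _ _, by
    simp only [Finset.mem_insert]
    rintro x (rfl | hx) y (rfl | hy) hxy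
    · exact absurd rfl hxy
    · exact (ha y hy).1
    · exact (ha x hx).2
    · exact A.2.2 x hx y hy hxy⟩

@[simp] theorem Clique.coe_insert (A : Clique D) (a : α) (ha : ∀ b ∈ A.1, ¬ D a b ∧ ¬ D b a) :
    (A.insert a ha).1 = Insert.insert a A.1 := rfl

theorem Clique.traceEquiv_toList_insert (hrefl : Reflexive D) (A : Clique D) (a : α)
    (ha : ∀ b ∈ A.1, ¬ D a b ∧ ¬ D b a) :
    TraceEquiv D (A.insert a ha).1.toList (A.1.toList ++ [a]) := by
  have haA : a ∉ A.1 := fun h => (ha a h).1 (hrefl a)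
  exact TraceEquiv.of_perm
    ((Finset.toList_insert haA).trans (List.perm_append_singleton a _).symm)
    fun x hx y hy => (A.insert a ha).2.2 x (by simpa using hx) y (by simpa using hy)

variable (hrefl : Reflexive D) (hsymm : Symmetric D)
include hrefl hsymm

theorem Foata.exists_traceEquiv_append_singleton {w : List (Clique D)} (hw : w ∈ Foata D)
    (a : α) : ∃ w' ∈ Foata D, TraceEquiv D (cliqueFlat w') (cliqueFlat w ++ [a]) := by
  obtain ⟨x, y, rfl, hy, hx⟩ :=
    List.exists_eq_append_longest_suffix (fun B : Clique D => ∀ b ∈ B.1, ¬ D b a) w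
  push Not at hx
  obtain ⟨hxc, hyc, hxy⟩ := List.isChain_append.1 hw
  cases y with
  | nil =>
    refine ⟨x ++ [Clique.singleton a],
      List.isChain_append.2 ⟨hxc, List.isChain_singleton _, ?_⟩, ?_⟩
    · simpa [Rhd] using hx
    · simpa using .refl _
  | cons B y =>
    have hB : ∀ b ∈ B.1, ¬ D a b ∧ ¬ D b a :=
      fun b hb => ⟨fun h => hy B (by simp) b hb (hsymm h), hy B (by simp) b hb⟩
    refine ⟨x ++ B.insert a hB :: y, List.isChain_append.2 ⟨hxc, ?_, ?_⟩, ?_⟩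
    · refine List.isChain_cons.2 ⟨fun C hC => ?_, hyc.tail⟩
      exact (List.isChain_cons.1 hyc).1 C hC |>.mono_left (Finset.subset_insert a B.1)
    · simp only [List.head?_cons, Option.mem_def, Option.some.injEq, forall_eq']
      intro C hC b hb
      rcases Finset.mem_insert.1 hb with rfl | hb
      · exact hx C hC
      · exact hxy C hC B rfl b hb
    · have hya : ∀ b ∈ cliqueFlat y, ¬ D a b := fun b hb h => by
        obtain ⟨C, hC, hbC⟩ : ∃ C ∈ y, b ∈ C.1 := by simpa [cliqueFlat] using hb
        exact hy C (by simp [hC]) b hbC (hsymm h)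
      have h₁ : TraceEquiv D ((B.insert a hB).1.toList ++ cliqueFlat y)
          (B.1.toList ++ a :: cliqueFlat y) := by
        simpa using (B.traceEquiv_toList_insert hrefl a hB).append_right (cliqueFlat y)
      have h₂ : TraceEquiv D (B.1.toList ++ a :: cliqueFlat y)
          (B.1.toList ++ cliqueFlat y ++ [a]) := by
        simpa using (TraceEquiv.cons_append_singleton hya).append_left B.1.toList
      simpa using (h₁.trans h₂).append_left (cliqueFlat x)

theorem Foata.exists_traceEquiv (u : List α) :
    ∃ w ∈ Foata D, TraceEquiv D (cliqueFlat w) u := by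
  induction u using List.reverseRecOn with
  | nil => exact ⟨[], List.isChain_nil, .refl _⟩
  | append_singleton u a ih =>
    obtain ⟨w, hw, hwu⟩ := ih
    obtain ⟨w', hw', h⟩ := Foata.exists_traceEquiv_append_singleton hrefl hsymm hw a
    exact ⟨w', hw', h.trans (hwu.append_right [a])⟩

end Existence

theorem foata_normal_form_exists_unique_general [DecidableEq α]
    (D : α → α → Prop) (hrefl : Reflexive D) (hsymm : Symmetric D)
    (u : List α) :
    ∃! w : List (Clique D), w ∈ Foata D ∧ TraceEquiv D (cliqueFlat w) u := by
  obtain ⟨w, hw, hwu⟩ := Foata.exists_traceEquiv hrefl hsymm u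
  refine ⟨w, ⟨hw, hwu⟩, fun w' ⟨hw', hw'u⟩ => ?_⟩
  exact Foata.eq_of_traceEquiv hrefl hsymm hw' hw (hw'u.trans hwu.symm)

/-- every trace has a unique Foata normal form: for each word
`u ∈ Σ*` there is exactly one word `A₁ ⋯ A_p ∈ Foata` whose image under the
canonical morphism is the trace `[u]`. -/
theorem foata_normal_form_exists_unique [Fintype α] [DecidableEq α]
    (D : α → α → Prop) (hrefl : Reflexive D) (hsymm : Symmetric D)
    (u : List α) :
    ∃! w : List (Clique D), w ∈ Foata D ∧ TraceEquiv D (cliqueFlat w) u :=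
  foata_normal_form_exists_unique_general D hrefl hsymm u
end

section
/- In a ground term rewriting graph that is isomorphic to a tree-of-copies graph T(G, p₀), every term t occurring as a vertex has a smallest position u_t (for the prefix ordering on positions) at which t is incident to a rewriting: any two positions at which t is incident to rewritings are comparable or both dominated by a common position of incidence. -/
/-- Ground terms over a signature `F`: finitely branching rose trees. -/
inductive Tm (F : Type*) : Type _
  | node : F → List (Tm F) → Tm F

variable {F V Λ : Type*}

/-- The subterm of `t` at position `p` (if `p` is a position of `t`).
Positions are words over `ℕ` (children numbered from 0). -/
def subtermAt : List ℕ → Tm F → Option (Tm F)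
  | [], t => some t
  | i :: p, Tm.node _ ts => (ts[i]?).bind (subtermAt p)

/-- `replaceAt p s t` replaces the subterm of `t` at position `p` by `s`
(if `p` is a position of `t`). -/
def replaceAt : List ℕ → Tm F → Tm F → Option (Tm F)
  | [], s, _ => some s
  | i :: p, s, Tm.node g ts =>
      (ts[i]?).bind fun c => (replaceAt p s c).map fun c' => Tm.node g (ts.set i c')

/-- `t` rewrites to `t'` with label `a` at position `p`, for a ground term
rewriting system given by a finite list `R` of rules `(l, a, r)`. -/
def stepAt (R : List (Tm F × Λ × Tm F)) (t : Tm F) (a : Λ) (t' : Tm F)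
    (p : List ℕ) : Prop :=
  ∃ l r, (l, a, r) ∈ R ∧ subtermAt p t = some l ∧ replaceAt p r t = some t'

/-- `t` rewrites to `t'` with label `a` (at some position). -/
def gtrStep (R : List (Tm F × Λ × Tm F)) (t : Tm F) (a : Λ) (t' : Tm F) : Prop :=
  ∃ p, stepAt R t a t' p

/-- `t` is reachable from the initial term `i` by rewriting. -/
def gtrReach (R : List (Tm F × Λ × Tm F)) (i t : Tm F) : Prop :=
  Relation.ReflTransGen (fun x y => ∃ a, gtrStep R x a y) i t

/-- Edges of the configuration graph of the GTR system `(R, i)`: rewriting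
edges between terms reachable from `i`. -/
def configEdge (R : List (Tm F × Λ × Tm F)) (i : Tm F) (t : Tm F) (a : Λ)
    (t' : Tm F) : Prop :=
  gtrReach R i t ∧ gtrStep R t a t'

/-- Vertices of the configuration graph: terms incident to an edge. -/
def gtrVertices (R : List (Tm F × Λ × Tm F)) (i : Tm F) : Set (Tm F) :=
  {t | ∃ a t', configEdge R i t a t' ∨ configEdge R i t' a t}

/-- The vertex `t` is incident at position `p` to a rewriting of the
configuration graph (as the source or the target of the rewriting edge). -/
def incidentAt (R : List (Tm F × Λ × Tm F)) (i : Tm F) (t : Tm F)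
    (p : List ℕ) : Prop :=
  ∃ a t', (gtrReach R i t ∧ stepAt R t a t' p) ∨
    (gtrReach R i t' ∧ stepAt R t' a t p)

/-- Edges of the tree-of-copies graph `T(G, p₀)` over a `Σ`-graph `G`:
vertices are words over `V_G`; edges `u·p →^a u·q` for each edge `p →^a q` of
`G`, and `u →^c u·p₀` for each word `u`, where the fresh label `c` is `none`
and labels of `G` are `some a`. -/
def treeEdge (G : V → Λ → V → Prop) (p₀ : V) :
    List V → Option Λ → List V → Prop
  | x, some a, y => ∃ u p q, G p a q ∧ x = u ++ [p] ∧ y = u ++ [q]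
  | x, none, y => y = x ++ [p₀]

/-!
Write `t = f x`. The `c`-edge `x → x·p₀` of `T(G, p₀)` is realised by a rewriting of `t` at some
position `w`. A rewriting incident to `t` at a position `p` incomparable with `w` commutes with it
(forward if `t` is its source, backward if `t` is its target), which yields a commuting square
`s →c s₁ →b s₃`, `s →b s₂ →c s₃`. In `T(G, p₀)` such a square forces `s₂ = s` or `s₂ = s₁`; the
first is excluded because left- and right-hand sides differ, the second because rewritings at
incomparable positions lead to distinct terms. So every incident position is comparable with `w`,
and the shortest one is a prefix of all of them.
-/

theorem replaceAt_cons_eq_some {i : ℕ} {p : List ℕ} {s : Tm F} {g : F} {ts : List (Tm F)}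
    {t' : Tm F} :
    replaceAt (i :: p) s (Tm.node g ts) = some t' ↔
      ∃ c c', ts[i]? = some c ∧ replaceAt p s c = some c' ∧ t' = Tm.node g (ts.set i c') := by
  simp only [replaceAt, Option.bind_eq_some_iff, Option.map_eq_some_iff]
  grind

theorem exists_replaceAt_of_subtermAt_eq_some (s : Tm F) :
    ∀ {p : List ℕ} {t l : Tm F}, subtermAt p t = some l → ∃ t', replaceAt p s t = some t'
  | [], _, _, _ => ⟨s, rfl⟩
  | i :: p, Tm.node g ts, _, h => by
    obtain ⟨c, hc, hsub⟩ := Option.bind_eq_some_iff.mp h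
    obtain ⟨c', hc'⟩ := exists_replaceAt_of_subtermAt_eq_some s hsub
    exact ⟨_, replaceAt_cons_eq_some.mpr ⟨c, c', hc, hc', rfl⟩⟩

theorem subtermAt_replaceAt_self {s : Tm F} :
    ∀ {p : List ℕ} {t t' : Tm F}, replaceAt p s t = some t' → subtermAt p t' = some s
  | [], _, _, h => by cases h; rfl
  | i :: p, Tm.node g ts, _, h => by
    obtain ⟨c, c', hc, hc', rfl⟩ := replaceAt_cons_eq_some.mp h
    have hi : i < ts.length := (List.getElem?_eq_some_iff.mp hc).1
    simp [subtermAt, List.getElem?_set_self hi, subtermAt_replaceAt_self hc']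

theorem subtermAt_replaceAt_of_not_prefix {r : Tm F} :
    ∀ {p q : List ℕ} {t t' : Tm F}, ¬ p <+: q → ¬ q <+: p → replaceAt q r t = some t' →
      subtermAt p t' = subtermAt p t
  | [], _, _, _, hpq, _, _ => absurd List.nil_prefix hpq
  | _ :: _, [], _, _, _, hqp, _ => absurd List.nil_prefix hqp
  | i :: p, j :: q, Tm.node g ts, _, hpq, hqp, h => by
    obtain ⟨c, c', hc, hc', rfl⟩ := replaceAt_cons_eq_some.mp h
    by_cases hij : i = j
    · subst hij
      simp only [List.cons_prefix_cons, true_and] at hpq hqp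
      have hi : i < ts.length := (List.getElem?_eq_some_iff.mp hc).1
      simp [subtermAt, List.getElem?_set_self hi, hc,
        subtermAt_replaceAt_of_not_prefix hpq hqp hc']
    · simp [subtermAt, List.getElem?_set_ne (Ne.symm hij)]

theorem replaceAt_comm {s r : Tm F} :
    ∀ {p q : List ℕ} {t t₁ t₂ : Tm F}, ¬ p <+: q → ¬ q <+: p →
      replaceAt p s t = some t₁ → replaceAt q r t = some t₂ →
        ∃ t₃, replaceAt q r t₁ = some t₃ ∧ replaceAt p s t₂ = some t₃
  | [], _, _, _, _, hpq, _, _, _ => absurd List.nil_prefix hpq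
  | _ :: _, [], _, _, _, _, hqp, _, _ => absurd List.nil_prefix hqp
  | i :: p, j :: q, Tm.node g ts, _, _, hpq, hqp, h₁, h₂ => by
    obtain ⟨c, c₁, hc, hc₁, rfl⟩ := replaceAt_cons_eq_some.mp h₁
    obtain ⟨d, d₂, hd, hd₂, rfl⟩ := replaceAt_cons_eq_some.mp h₂
    have hi : i < ts.length := (List.getElem?_eq_some_iff.mp hc).1
    by_cases hij : i = j
    · subst hij
      obtain rfl : c = d := Option.some_inj.mp (hc.symm.trans hd)
      simp only [List.cons_prefix_cons, true_and] at hpq hqp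
      obtain ⟨c₃, h₁₃, h₂₃⟩ := replaceAt_comm hpq hqp hc₁ hd₂
      exact ⟨Tm.node g (ts.set i c₃),
        replaceAt_cons_eq_some.mpr ⟨c₁, c₃, List.getElem?_set_self hi, h₁₃, by simp⟩,
        replaceAt_cons_eq_some.mpr ⟨d₂, c₃, List.getElem?_set_self hi, h₂₃, by simp⟩⟩
    · exact ⟨Tm.node g ((ts.set i c₁).set j d₂),
        replaceAt_cons_eq_some.mpr ⟨d, d₂, by rwa [List.getElem?_set_ne hij], hd₂, rfl⟩,
        replaceAt_cons_eq_some.mpr ⟨c, c₁, by rwa [List.getElem?_set_ne (Ne.symm hij)], hc₁,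
          by rw [List.set_comm _ _ hij]⟩⟩

section Steps

variable {R : List (Tm F × Λ × Tm F)}

theorem stepAt_ne (hR : ∀ l a r, (l, a, r) ∈ R → l ≠ r) {t t' : Tm F} {a : Λ} {p : List ℕ}
    (h : stepAt R t a t' p) : t ≠ t' := by
  rintro rfl
  obtain ⟨l, r, hmem, hl, hr⟩ := h
  exact hR l a r hmem (Option.some_inj.mp (hl.symm.trans (subtermAt_replaceAt_self hr)))

theorem stepAt_ne_of_not_prefix (hR : ∀ l a r, (l, a, r) ∈ R → l ≠ r)
    {t t₁ t₂ : Tm F} {a b : Λ} {p q : List ℕ} (hpq : ¬ p <+: q) (hqp : ¬ q <+: p)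
    (h₁ : stepAt R t a t₁ p) (h₂ : stepAt R t b t₂ q) : t₁ ≠ t₂ := by
  rintro rfl
  obtain ⟨l, r, hmem, hl, hr⟩ := h₁
  obtain ⟨_, _, _, _, hr₂⟩ := h₂
  have hl₁ : subtermAt p t₁ = some l := (subtermAt_replaceAt_of_not_prefix hpq hqp hr₂).trans hl
  exact hR l a r hmem (Option.some_inj.mp (hl₁.symm.trans (subtermAt_replaceAt_self hr)))

theorem stepAt_comm {t t₁ t₂ : Tm F} {a b : Λ} {p q : List ℕ} (hpq : ¬ p <+: q)
    (hqp : ¬ q <+: p) (h₁ : stepAt R t a t₁ p) (h₂ : stepAt R t b t₂ q) :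
    ∃ t₃, stepAt R t₁ b t₃ q ∧ stepAt R t₂ a t₃ p := by
  obtain ⟨l₁, r₁, hm₁, hl₁, hr₁⟩ := h₁
  obtain ⟨l₂, r₂, hm₂, hl₂, hr₂⟩ := h₂
  obtain ⟨t₃, h₁₃, h₂₃⟩ := replaceAt_comm hpq hqp hr₁ hr₂
  exact ⟨t₃, ⟨l₂, r₂, hm₂, (subtermAt_replaceAt_of_not_prefix hqp hpq hr₁).trans hl₂, h₁₃⟩,
    ⟨l₁, r₁, hm₁, (subtermAt_replaceAt_of_not_prefix hpq hqp hr₂).trans hl₁, h₂₃⟩⟩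

theorem stepAt_swap {s t t' : Tm F} {a b : Λ} {p q : List ℕ}
    (hpq : ¬ p <+: q) (hqp : ¬ q <+: p) (h₁ : stepAt R s a t p) (h₂ : stepAt R t b t' q) :
    ∃ s', stepAt R s b s' q ∧ stepAt R s' a t' p := by
  obtain ⟨l₁, r₁, hm₁, hl₁, hr₁⟩ := h₁
  obtain ⟨l₂, r₂, hm₂, hl₂, hr₂⟩ := h₂
  have hl₂' : subtermAt q s = some l₂ :=
    (subtermAt_replaceAt_of_not_prefix hqp hpq hr₁).symm.trans hl₂
  obtain ⟨s', hs'⟩ := exists_replaceAt_of_subtermAt_eq_some r₂ hl₂'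
  obtain ⟨t₃, h₁₃, h₂₃⟩ := replaceAt_comm hpq hqp hr₁ hs'
  obtain rfl : t₃ = t' := Option.some_inj.mp (h₁₃.symm.trans hr₂)
  exact ⟨s', ⟨l₂, r₂, hm₂, hl₂', hs'⟩,
    ⟨l₁, r₁, hm₁, (subtermAt_replaceAt_of_not_prefix hpq hqp hs').trans hl₁, h₂₃⟩⟩

end Steps

theorem treeEdge_square {G : V → Λ → V → Prop} {p₀ : V} {x x' y z : List V} {b : Option Λ}
    (h₁ : treeEdge G p₀ x none x') (h₂ : treeEdge G p₀ x b y) (h₃ : treeEdge G p₀ x' b z)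
    (h₄ : treeEdge G p₀ y none z) : y = x ∨ y = x' := by
  change x' = x ++ [p₀] at h₁
  change z = y ++ [p₀] at h₄
  subst h₁ h₄
  cases b with
  | none => exact Or.inr h₂
  | some a =>
    obtain ⟨u, _, _, _, hx, hy⟩ := h₃
    left
    rw [(List.append_inj' hx rfl).1, (List.append_inj' hy rfl).1]

theorem List.exists_least_prefix_of_comparable {α : Type*} {S : Set (List α)} {w : List α}
    (hw : w ∈ S) (hcomp : ∀ p ∈ S, w <+: p ∨ p <+: w) : ∃ u ∈ S, ∀ p ∈ S, u <+: p := by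
  obtain ⟨u, hu, hmin⟩ := (measure List.length).wf.has_min S ⟨w, hw⟩
  have hlen : ∀ p ∈ S, u.length ≤ p.length := fun p hp => not_lt.mp (hmin p hp)
  have huw : u <+: w := by
    rcases hcomp u hu with h | h
    · rw [h.eq_of_length_le (hlen w hw)]
    · exact h
  refine ⟨u, hu, fun p hp => ?_⟩
  rcases hcomp p hp with h | h
  · exact huw.trans h
  · exact List.prefix_of_prefix_length_le huw h (hlen p hp)

section TreeOfCopies

variable {Lab : Type*} {R : List (Tm F × Option Lab × Tm F)} {i : Tm F} {G : V → Lab → V → Prop}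
  {p₀ : V} {f : List V → Tm F}

theorem false_of_commuting_square (hR : ∀ l a r, (l, a, r) ∈ R → l ≠ r)
    (hsurj : ∀ t ∈ gtrVertices R i, ∃ x, f x = t)
    (hedge : ∀ (x y : List V) (l : Option Lab),
      treeEdge G p₀ x l y ↔ configEdge R i (f x) l (f y))
    {s s₁ s₂ s₃ : Tm F} {b : Option Lab} {w p : List ℕ} (hwp : ¬ w <+: p) (hpw : ¬ p <+: w)
    (hs : gtrReach R i s) (h₁ : stepAt R s none s₁ w) (h₂ : stepAt R s b s₂ p)
    (h₃ : stepAt R s₁ b s₃ p) (h₄ : stepAt R s₂ none s₃ w) : False := by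
  have hs₁ : gtrReach R i s₁ := hs.tail ⟨none, w, h₁⟩
  have hs₂ : gtrReach R i s₂ := hs.tail ⟨b, p, h₂⟩
  obtain ⟨x, rfl⟩ := hsurj s ⟨none, s₁, .inl ⟨hs, w, h₁⟩⟩
  obtain ⟨x₁, rfl⟩ := hsurj s₁ ⟨b, s₃, .inl ⟨hs₁, p, h₃⟩⟩
  obtain ⟨x₂, rfl⟩ := hsurj s₂ ⟨none, s₃, .inl ⟨hs₂, w, h₄⟩⟩
  obtain ⟨x₃, rfl⟩ := hsurj s₃ ⟨none, f x₂, .inr ⟨hs₂, w, h₄⟩⟩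
  rcases treeEdge_square ((hedge _ _ _).mpr ⟨hs, w, h₁⟩) ((hedge _ _ _).mpr ⟨hs, p, h₂⟩)
    ((hedge _ _ _).mpr ⟨hs₁, p, h₃⟩) ((hedge _ _ _).mpr ⟨hs₂, w, h₄⟩) with rfl | rfl
  · exact stepAt_ne hR h₂ rfl
  · exact stepAt_ne_of_not_prefix hR hwp hpw h₁ h₂ rfl

theorem prefix_or_prefix_of_incidentAt (hR : ∀ l a r, (l, a, r) ∈ R → l ≠ r)
    (hsurj : ∀ t ∈ gtrVertices R i, ∃ x, f x = t)
    (hedge : ∀ (x y : List V) (l : Option Lab),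
      treeEdge G p₀ x l y ↔ configEdge R i (f x) l (f y))
    {t t' : Tm F} {w p : List ℕ} (ht : gtrReach R i t) (hw : stepAt R t none t' w)
    (hp : incidentAt R i t p) : w <+: p ∨ p <+: w := by
  by_contra! ⟨hwp, hpw⟩
  obtain ⟨b, s, ⟨-, hts⟩ | ⟨hs, hst⟩⟩ := hp
  · obtain ⟨s', h₁, h₂⟩ := stepAt_comm hwp hpw hw hts
    exact false_of_commuting_square hR hsurj hedge hwp hpw ht hw hts h₁ h₂
  · obtain ⟨s', h₁, h₂⟩ := stepAt_swap hpw hwp hst hw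
    exact false_of_commuting_square hR hsurj hedge hwp hpw hs h₁ hst h₂ hw

end TreeOfCopies

theorem gtr_tree_smallest_rewriting_position_general
    {F V Lab : Type*} (R : List (Tm F × Option Lab × Tm F))
    (hR : ∀ l a r, (l, a, r) ∈ R → l ≠ r)
    (i : Tm F) (G : V → Lab → V → Prop) (p₀ : V)
    (f : List V → Tm F)
    (hsurj : ∀ t ∈ gtrVertices R i, ∃ x, f x = t)
    (hedge : ∀ (x y : List V) (l : Option Lab),
      treeEdge G p₀ x l y ↔ configEdge R i (f x) l (f y)) :
    ∀ t ∈ gtrVertices R i, ∃ u : List ℕ, incidentAt R i t u ∧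
      ∀ p : List ℕ, incidentAt R i t p → u <+: p := by
  intro t ht
  obtain ⟨x, rfl⟩ := hsurj t ht
  obtain ⟨hx, w, hw⟩ : configEdge R i (f x) none (f (x ++ [p₀])) := (hedge _ _ none).mp rfl
  exact List.exists_least_prefix_of_comparable (S := {p | incidentAt R i (f x) p})
    ⟨none, _, .inl ⟨hx, hw⟩⟩ fun p hp => prefix_or_prefix_of_incidentAt hR hsurj hedge hx hw hp

/-- Lemma `reecincomp`: if the configuration graph of a ground
term rewriting system `(R, i)` (with distinct left and right hand sides) is
isomorphic to a tree-of-copies graph `T(G, p₀)`, then every term `t` occurring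
as a vertex has a smallest position (for the prefix ordering) at which `t` is
incident to a rewriting. -/
theorem gtr_tree_smallest_rewriting_position
    {F V Lab : Type*} (R : List (Tm F × Option Lab × Tm F))
    (hR : ∀ l a r, (l, a, r) ∈ R → l ≠ r)
    (i : Tm F) (G : V → Lab → V → Prop) (p₀ : V)
    (f : List V → Tm F) (hinj : Function.Injective f)
    (hsurj : ∀ t ∈ gtrVertices R i, ∃ x, f x = t)
    (hedge : ∀ (x y : List V) (l : Option Lab),
      treeEdge G p₀ x l y ↔ configEdge R i (f x) l (f y)) :
    ∀ t ∈ gtrVertices R i, ∃ u : List ℕ, incidentAt R i t u ∧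
      ∀ p : List ℕ, incidentAt R i t p → u <+: p :=
  gtr_tree_smallest_rewriting_position_general R hR i G p₀ f hsurj hedge
end
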